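/- Fix ρ ∈ [-1,1], c₊, c₋ ∈ ℝ, and p > 0. For each natural number n ≥ 1 let s₊ = 1 + c₊/nᵖ, s₋ = 1 + c₋/nᵖ, let φ_{s,n}(x) = s₊·max(x,0) + s₋·min(x,0), let cₙ = ( E[φ_{s,n}(g)²] )⁻¹, and let K₁,ₙ(ρ) = E[φ_{s,n}(g)·φ_{s,n}(ĝ)], where g, w are independent standard Gaussians and ĝ = ρg + √(1-ρ²)·w. Then lim_{n→∞} n^{2p} · ( cₙ·K₁,ₙ(ρ) − ρ ) = ((c₊ − c₋)²/(2π)) · ( √(1-ρ²) − ρ·arccos ρ ). -/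

import Mathlib

open MeasureTheory ProbabilityTheory Real Filter

/-- The shaped (leaky) ReLU with positive slope `sp` and negative slope `sm`. -/
noncomputable def shapedReLU (sp sm x : ℝ) : ℝ := sp * max x 0 + sm * min x 0

open Set Topology

/-!
Write the shaped ReLU as `φ(x) = a x + b |x|` with `a = (s₊ + s₋)/2` and
`b = (s₊ - s₋)/2 = (c₊ - c₋)/(2nᵖ)`. In polar coordinates `(g, w) = (r cos θ, r sin θ)` one has
`ĝ = r cos (θ - α)` with `α = arccos ρ`, so positive homogeneity of `φ` turns both Gaussian
expectations into integrals over the circle: `E[φ(g) φ(ĝ)] = a² ρ + b² J(ρ)` with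
`J(ρ) = E[|g| |ĝ|] = (2√(1-ρ²) + (π - 2α) ρ)/π`, the cross terms vanishing because they change sign
under `θ ↦ θ + π`. At `ρ = 1` this gives `E[φ(g)²] = a² + b²`, hence
`cₙ K₁,ₙ(ρ) - ρ = b² (J(ρ) - ρ)/(a² + b²)`, where `n^{2p} b² = (c₊ - c₋)²/4` and `a² + b² → 1`.
-/

lemma integral_gaussianReal_prod_eq_integral_pdf_mul (f : ℝ × ℝ → ℝ) :
    ∫ q, f q ∂(gaussianReal 0 1).prod (gaussianReal 0 1)
      = ∫ q, (gaussianPDFReal 0 1 q.1 * gaussianPDFReal 0 1 q.2) * f q := by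
  rw [gaussianReal_of_var_ne_zero 0 one_ne_zero,
    prod_withDensity (measurable_gaussianPDF _ _) (measurable_gaussianPDF _ _),
    ← Measure.volume_eq_prod, integral_withDensity_eq_integral_toReal_smul (by fun_prop)
      (ae_of_all _ fun _ => ENNReal.mul_lt_top gaussianPDF_lt_top gaussianPDF_lt_top)]
  simp [gaussianPDF, ENNReal.toReal_mul, gaussianPDFReal_nonneg]

lemma integral_Ioi_pow_three_mul_exp_neg_sq_div_two :
    ∫ r in Ioi (0 : ℝ), r ^ 3 * rexp (-r ^ 2 / 2) = 2 := by
  have h := integral_rpow_mul_exp_neg_mul_rpow (p := 2) (q := 3) (b := 1 / 2)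
    two_pos (by norm_num) (by norm_num)
  norm_num at h
  refine Eq.trans (setIntegral_congr_fun measurableSet_Ioi fun r _ => ?_) h
  ring_nf

lemma gaussianPDFReal_mul_gaussianPDFReal_polar (r θ : ℝ) :
    gaussianPDFReal 0 1 (r * cos θ) * gaussianPDFReal 0 1 (r * sin θ)
      = (2 * π)⁻¹ * rexp (-r ^ 2 / 2) := by
  have hr : r ^ 2 = (r * cos θ) ^ 2 + (r * sin θ) ^ 2 := by
    linear_combination r ^ 2 * (sin_sq_add_cos_sq θ).symm
  simp only [gaussianPDFReal, NNReal.coe_one, mul_one, sub_zero]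
  rw [hr, mul_mul_mul_comm, ← mul_inv, mul_self_sqrt (by positivity), ← exp_add]
  ring_nf

lemma integral_gaussianReal_prod_of_homogeneous (f : ℝ × ℝ → ℝ) (G : ℝ → ℝ)
    (hfG : ∀ r θ : ℝ, 0 < r → f (r * cos θ, r * sin θ) = r ^ 2 * G θ) :
    ∫ q, f q ∂(gaussianReal 0 1).prod (gaussianReal 0 1)
      = π⁻¹ * ∫ θ in -π..π, G θ := by
  have hpolar : ∀ z ∈ polarCoord.target, z.1 • ((fun q : ℝ × ℝ =>
      (gaussianPDFReal 0 1 q.1 * gaussianPDFReal 0 1 q.2) * f q) (polarCoord.symm z))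
        = (2 * π)⁻¹ * ((z.1 ^ 3 * rexp (-z.1 ^ 2 / 2)) * G z.2) := by
    rintro ⟨r, θ⟩ ⟨hr, -⟩
    simp only [polarCoord_symm_apply, smul_eq_mul, gaussianPDFReal_mul_gaussianPDFReal_polar,
      hfG r θ hr]
    ring
  rw [integral_gaussianReal_prod_eq_integral_pdf_mul, ← integral_comp_polarCoord_symm,
    setIntegral_congr_fun polarCoord.open_target.measurableSet hpolar, integral_const_mul,
    polarCoord_target, Measure.volume_eq_prod,
    setIntegral_prod_mul (fun r : ℝ => r ^ 3 * rexp (-r ^ 2 / 2)) G,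
    integral_Ioi_pow_three_mul_exp_neg_sq_div_two, ← integral_Ioc_eq_integral_Ioo,
    ← intervalIntegral.integral_of_le (by linarith [pi_pos])]
  field_simp

lemma Function.Antiperiodic.intervalIntegral_add_two_mul_eq_zero {f : ℝ → ℝ} {T : ℝ}
    (hf : Function.Antiperiodic f T) (h_int : ∀ a b, IntervalIntegrable f volume a b) (t : ℝ) :
    ∫ x in t..t + 2 * T, f x = 0 := by
  have hshift : ∫ x in t + T..t + 2 * T, f x = -∫ x in t..t + T, f x := by
    calc ∫ x in t + T..t + 2 * T, f x = ∫ x in t..t + T, f (x + T) := by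
          rw [intervalIntegral.integral_comp_add_right]; ring_nf
      _ = -∫ x in t..t + T, f x := by simp only [hf _, intervalIntegral.integral_neg]
  rw [← intervalIntegral.integral_add_adjacent_intervals (h_int t (t + T)) (h_int _ _), hshift,
    add_neg_cancel]

lemma Function.Periodic.intervalIntegral_add_two_mul_eq {f : ℝ → ℝ} {T : ℝ}
    (hf : Function.Periodic f T) (h_int : ∀ a b, IntervalIntegrable f volume a b) (t s : ℝ) :
    ∫ x in t..t + 2 * T, f x = 2 * ∫ x in s..s + T, f x := by
  have h := hf.intervalIntegral_add_zsmul_eq 2 t h_int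
  simp only [zsmul_eq_mul, Int.cast_ofNat] at h
  rw [h, hf.intervalIntegral_add_eq t s]

lemma integral_cos_mul_cos_sub (α u v : ℝ) : ∫ θ in u..v, cos θ * cos (θ - α) =
    (sin (2 * v - α) / 4 + v * cos α / 2) - (sin (2 * u - α) / 4 + u * cos α / 2) := by
  refine intervalIntegral.integral_eq_sub_of_hasDerivAt
    (f := fun θ => sin (2 * θ - α) / 4 + θ * cos α / 2) (fun x _ => ?_)
    ((by fun_prop : Continuous fun θ => cos θ * cos (θ - α)).intervalIntegrable _ _)
  have hd : HasDerivAt (fun θ => sin (2 * θ - α) / 4 + θ * cos α / 2)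
      (cos (2 * x - α) * 2 / 4 + cos α / 2) x := by
    have h2 : HasDerivAt (fun θ : ℝ => 2 * θ - α) 2 x := by
      simpa using ((hasDerivAt_id x).const_mul 2).sub_const α
    simpa using (h2.sin.div_const 4).fun_add (((hasDerivAt_id x).mul_const (cos α)).div_const 2)
  refine hd.congr_deriv ?_
  have h2x : cos (2 * x - α) = cos x * cos (x - α) - sin x * sin (x - α) := by
    rw [show 2 * x - α = x + (x - α) by ring, cos_add]
  have hα : cos α = cos x * cos (x - α) + sin x * sin (x - α) := by
    rw [← cos_sub, sub_sub_cancel]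
  linear_combination h2x / 2 + hα / 2

lemma integral_cos_mul_cos_sub_neg_pi_pi (α : ℝ) :
    ∫ θ in -π..π, cos θ * cos (θ - α) = π * cos α := by
  rw [integral_cos_mul_cos_sub, show 2 * π - α = -α + 2 * π by ring,
    show 2 * -π - α = -α - 2 * π by ring, sin_add_two_pi, sin_sub_two_pi]
  ring

lemma integral_abs_cos_mul_cos_sub_neg_pi_pi {α : ℝ} (h0 : 0 ≤ α) (hπ : α ≤ π) :
    ∫ θ in -π..π, |cos θ * cos (θ - α)| = 2 * sin α + (π - 2 * α) * cos α := by
  have hper : Function.Periodic (fun θ => |cos θ * cos (θ - α)|) π := fun θ => by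
    simp [add_sub_right_comm, cos_add_pi]
  have hint : ∀ a b, IntervalIntegrable (fun θ => |cos θ * cos (θ - α)|) volume a b :=
    fun a b => (by fun_prop : Continuous fun θ => |cos θ * cos (θ - α)|).intervalIntegrable a b
  -- over the period `[α - π/2, α + π/2]`, only `cos θ` changes sign (at `π/2`)
  have hpos : ∫ θ in α - π / 2..π / 2, |cos θ * cos (θ - α)|
      = ∫ θ in α - π / 2..π / 2, cos θ * cos (θ - α) := by
    refine intervalIntegral.integral_congr fun θ hθ => abs_of_nonneg (mul_nonneg ?_ ?_)
    all_goals rw [uIcc_of_le (by linarith)] at hθ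
    · exact cos_nonneg_of_mem_Icc ⟨by linarith [hθ.1], hθ.2⟩
    · exact cos_nonneg_of_mem_Icc ⟨by linarith [hθ.1], by linarith [hθ.2]⟩
  have hneg : ∫ θ in π / 2..α + π / 2, |cos θ * cos (θ - α)|
      = -∫ θ in π / 2..α + π / 2, cos θ * cos (θ - α) := by
    rw [← intervalIntegral.integral_neg]
    refine intervalIntegral.integral_congr fun θ hθ => ?_
    rw [uIcc_of_le (by linarith)] at hθ
    rw [abs_of_nonpos, neg_mul_eq_neg_mul]
    refine mul_nonpos_of_nonpos_of_nonneg ?_ ?_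
    · exact cos_nonpos_of_pi_div_two_le_of_le hθ.1 (by linarith [hθ.2])
    · exact cos_nonneg_of_mem_Icc ⟨by linarith [hθ.1], by linarith [hθ.2]⟩
  calc ∫ θ in -π..π, |cos θ * cos (θ - α)|
      = 2 * ∫ θ in α - π / 2..α - π / 2 + π, |cos θ * cos (θ - α)| := by
        rw [← hper.intervalIntegral_add_two_mul_eq hint (-π)]; ring_nf
    _ = 2 * ((∫ θ in α - π / 2..π / 2, cos θ * cos (θ - α))
          - ∫ θ in π / 2..α + π / 2, cos θ * cos (θ - α)) := by
        rw [← intervalIntegral.integral_add_adjacent_intervals (hint _ (π / 2)) (hint _ _),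
          hpos, show α - π / 2 + π = α + π / 2 by ring, hneg]
        ring
    _ = 2 * sin α + (π - 2 * α) * cos α := by
        rw [integral_cos_mul_cos_sub, integral_cos_mul_cos_sub,
          show 2 * (π / 2) - α = π - α by ring, show 2 * (α - π / 2) - α = α - π by ring,
          show 2 * (α + π / 2) - α = α + π by ring, sin_pi_sub, sin_sub_pi, sin_add_pi]
        ring

lemma shapedReLU_eq_add_abs (sp sm x : ℝ) :
    shapedReLU sp sm x = (sp + sm) / 2 * x + (sp - sm) / 2 * |x| := by
  rcases le_total 0 x with h | h
  · rw [shapedReLU, max_eq_left h, min_eq_right h, abs_of_nonneg h]; ring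
  · rw [shapedReLU, max_eq_right h, min_eq_left h, abs_of_nonpos h]; ring

lemma shapedReLU_mul_of_nonneg (sp sm : ℝ) {r : ℝ} (hr : 0 ≤ r) (x : ℝ) :
    shapedReLU sp sm (r * x) = r * shapedReLU sp sm x := by
  rw [shapedReLU_eq_add_abs, shapedReLU_eq_add_abs, abs_mul, abs_of_nonneg hr]
  ring

lemma integral_shapedReLU_cos_mul_shapedReLU_cos_sub (sp sm : ℝ) {α : ℝ} (h0 : 0 ≤ α)
    (hπ : α ≤ π) :
    ∫ θ in -π..π, shapedReLU sp sm (cos θ) * shapedReLU sp sm (cos (θ - α))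
      = ((sp + sm) / 2) ^ 2 * (π * cos α)
        + ((sp - sm) / 2) ^ 2 * (2 * sin α + (π - 2 * α) * cos α) := by
  set a := (sp + sm) / 2
  set b := (sp - sm) / 2
  have hsplit : ∀ θ, shapedReLU sp sm (cos θ) * shapedReLU sp sm (cos (θ - α))
      = a ^ 2 * (cos θ * cos (θ - α))
        + a * b * (cos θ * |cos (θ - α)| + |cos θ| * cos (θ - α))
        + b ^ 2 * |cos θ * cos (θ - α)| := fun θ => by
    rw [shapedReLU_eq_add_abs, shapedReLU_eq_add_abs, abs_mul]; ring
  have hcross : ∫ θ in -π..π, (cos θ * |cos (θ - α)| + |cos θ| * cos (θ - α)) = 0 := by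
    have hanti : Function.Antiperiodic
        (fun θ => cos θ * |cos (θ - α)| + |cos θ| * cos (θ - α)) π := fun θ => by
      simp only [add_sub_right_comm, cos_add_pi, abs_neg]; ring
    simpa [show -π + 2 * π = π by ring] using hanti.intervalIntegral_add_two_mul_eq_zero
      (fun a b => (by fun_prop : Continuous fun θ =>
        cos θ * |cos (θ - α)| + |cos θ| * cos (θ - α)).intervalIntegrable a b) (-π)
  simp_rw [hsplit]
  rw [intervalIntegral.integral_add, intervalIntegral.integral_add,
    intervalIntegral.integral_const_mul, intervalIntegral.integral_const_mul,
    intervalIntegral.integral_const_mul, hcross, integral_cos_mul_cos_sub_neg_pi_pi,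
    integral_abs_cos_mul_cos_sub_neg_pi_pi h0 hπ, mul_zero, add_zero]
  all_goals exact (by fun_prop : Continuous _).intervalIntegrable _ _

lemma integral_shapedReLU_mul_shapedReLU_gaussianReal (sp sm : ℝ) {ρ : ℝ}
    (hρ : ρ ∈ Icc (-1 : ℝ) 1) :
    ∫ q : ℝ × ℝ, shapedReLU sp sm q.1 * shapedReLU sp sm (ρ * q.1 + √(1 - ρ ^ 2) * q.2)
        ∂(gaussianReal 0 1).prod (gaussianReal 0 1)
      = ((sp + sm) / 2) ^ 2 * ρ
        + ((sp - sm) / 2) ^ 2 * ((2 * √(1 - ρ ^ 2) + (π - 2 * arccos ρ) * ρ) / π) := by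
  have hcos : cos (arccos ρ) = ρ := cos_arccos hρ.1 hρ.2
  have hrot : ∀ θ, ρ * cos θ + √(1 - ρ ^ 2) * sin θ = cos (θ - arccos ρ) := fun θ => by
    rw [cos_sub, hcos, sin_arccos]; ring
  rw [integral_gaussianReal_prod_of_homogeneous _
      (fun θ => shapedReLU sp sm (cos θ) * shapedReLU sp sm (cos (θ - arccos ρ))),
    integral_shapedReLU_cos_mul_shapedReLU_cos_sub sp sm (arccos_nonneg ρ) (arccos_le_pi ρ),
    hcos, sin_arccos]
  · field_simp
  · intro r θ hr
    rw [← hrot, show ρ * (r * cos θ) + √(1 - ρ ^ 2) * (r * sin θ)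
        = r * (ρ * cos θ + √(1 - ρ ^ 2) * sin θ) by ring,
      shapedReLU_mul_of_nonneg _ _ hr.le, shapedReLU_mul_of_nonneg _ _ hr.le]
    ring

lemma integral_shapedReLU_sq_gaussianReal (sp sm : ℝ) :
    ∫ x, shapedReLU sp sm x ^ 2 ∂gaussianReal 0 1 = ((sp + sm) / 2) ^ 2 + ((sp - sm) / 2) ^ 2 := by
  simpa [← sq, integral_fun_fst (fun x => shapedReLU sp sm x ^ 2)] using
    integral_shapedReLU_mul_shapedReLU_gaussianReal sp sm (ρ := 1) ⟨by norm_num, le_rfl⟩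

lemma tendsto_sq_mul_normalized_sub {ι : Type*} {l : Filter ι} {s a b : ι → ℝ} {β ρ J : ℝ}
    (ha : Tendsto a l (𝓝 1)) (hb : Tendsto b l (𝓝 0))
    (hsb : Tendsto (fun i => s i * b i) l (𝓝 β)) :
    Tendsto (fun i => s i ^ 2 * ((a i ^ 2 + b i ^ 2)⁻¹ * (a i ^ 2 * ρ + b i ^ 2 * J) - ρ)) l
      (𝓝 (β ^ 2 * (J - ρ))) := by
  have hnorm : Tendsto (fun i => a i ^ 2 + b i ^ 2) l (𝓝 1) := by
    simpa using (ha.pow 2).add (hb.pow 2)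
  have hlim := ((hsb.pow 2).mul_const (J - ρ)).mul (hnorm.inv₀ one_ne_zero)
  rw [inv_one, mul_one] at hlim
  refine hlim.congr' ?_
  filter_upwards [hnorm.eventually_ne one_ne_zero] with i hi
  field_simp
  ring

theorem shaped_relu_drift_limit (ρ cp cm p : ℝ) (hρ : ρ ∈ Set.Icc (-1 : ℝ) 1)
    (hp : 0 < p) :
    Tendsto
      (fun n : ℕ =>
        (n : ℝ) ^ (2 * p) *
          ((∫ x : ℝ, (shapedReLU (1 + cp / (n : ℝ) ^ p) (1 + cm / (n : ℝ) ^ p) x) ^ 2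
              ∂(gaussianReal 0 1))⁻¹ *
            (∫ q : ℝ × ℝ,
                shapedReLU (1 + cp / (n : ℝ) ^ p) (1 + cm / (n : ℝ) ^ p) q.1 *
                  shapedReLU (1 + cp / (n : ℝ) ^ p) (1 + cm / (n : ℝ) ^ p)
                    (ρ * q.1 + Real.sqrt (1 - ρ ^ 2) * q.2)
              ∂((gaussianReal 0 1).prod (gaussianReal 0 1))) - ρ))
      atTop
      (nhds ((cp - cm) ^ 2 / (2 * π) * (Real.sqrt (1 - ρ ^ 2) - ρ * Real.arccos ρ))) := by
  have hpow : Tendsto (fun n : ℕ => (n : ℝ) ^ p) atTop atTop :=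
    (tendsto_rpow_atTop hp).comp tendsto_natCast_atTop_atTop
  have hcp : Tendsto (fun n : ℕ => cp / (n : ℝ) ^ p) atTop (𝓝 0) :=
    tendsto_const_nhds.div_atTop hpow
  have hcm : Tendsto (fun n : ℕ => cm / (n : ℝ) ^ p) atTop (𝓝 0) :=
    tendsto_const_nhds.div_atTop hpow
  have hsb : Tendsto
      (fun n : ℕ => (n : ℝ) ^ p * ((1 + cp / (n : ℝ) ^ p - (1 + cm / (n : ℝ) ^ p)) / 2))
      atTop (𝓝 ((cp - cm) / 2)) := by
    refine tendsto_const_nhds.congr' ?_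
    filter_upwards [hpow.eventually_ne_atTop 0] with n hn
    field_simp
    ring
  have key := tendsto_sq_mul_normalized_sub (ρ := ρ)
    (J := (2 * √(1 - ρ ^ 2) + (π - 2 * arccos ρ) * ρ) / π)
    (by simpa using ((hcp.const_add 1).add (hcm.const_add 1)).div_const 2)
    (by simpa using ((hcp.const_add 1).sub (hcm.const_add 1)).div_const 2) hsb
  convert key using 2 with n
  · rw [integral_shapedReLU_sq_gaussianReal,
      integral_shapedReLU_mul_shapedReLU_gaussianReal _ _ hρ, mul_comm 2 p,
      rpow_mul (Nat.cast_nonneg n), rpow_two]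
  · field_simp
    ring
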